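/- Existence of related target values (anf_val_rel_exists). For every well-formed λDS value v there exists a λANF value v′ such that anf_val_rel(v, v′). -/
import Mathlib


namespace ANF

abbrev Var := ℕ
abbrev CTag := ℕ

/-! ## Source language λDS (de Bruijn, call-by-value) -/

inductive SExp : Type where
  | var : ℕ → SExp
  | slet : SExp → SExp → SExp
  | lam : SExp → SExp
  | app : SExp → SExp → SExp
  | constr : CTag → List SExp → SExp
  | smatch : SExp → List (CTag × SExp) → SExp

inductive SVal : Type where
  | constr : CTag → List SVal → SVal
  | clo : List SVal → SExp → SVal

inductive SRes : Type where
  | val : SVal → SRes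
  | oot : SRes

-- Fuel-indexed big-step semantics of λDS: one fuel unit per rule application;
-- `OOT` is produced exactly when fuel is exhausted.
mutual
inductive SEval : List SVal → SExp → ℕ → SRes → Prop where
  | oot {ρ e} : SEval ρ e 0 .oot
  | var {ρ n v} : ρ[n]? = some v → SEval ρ (.var n) 1 (.val v)
  | lam {ρ e} : SEval ρ (.lam e) 1 (.val (.clo ρ e))
  | slet {ρ e1 e2 v1 r f1 f2} :
      SEval ρ e1 f1 (.val v1) → SEval (v1 :: ρ) e2 f2 r →
      SEval ρ (.slet e1 e2) (f1 + f2 + 1) r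
  | slet_oot {ρ e1 e2 f1} :
      SEval ρ e1 f1 .oot → SEval ρ (.slet e1 e2) (f1 + 1) .oot
  | app {ρ e1 e2 ρ' eb v2 r f1 f2 f3} :
      SEval ρ e1 f1 (.val (.clo ρ' eb)) →
      SEval ρ e2 f2 (.val v2) →
      SEval (v2 :: ρ') eb f3 r →
      SEval ρ (.app e1 e2) (f1 + f2 + f3 + 1) r
  | app_oot1 {ρ e1 e2 f1} :
      SEval ρ e1 f1 .oot → SEval ρ (.app e1 e2) (f1 + 1) .oot
  | app_oot2 {ρ e1 e2 v1 f1 f2} :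
      SEval ρ e1 f1 (.val v1) → SEval ρ e2 f2 .oot →
      SEval ρ (.app e1 e2) (f1 + f2 + 1) .oot
  | constr {ρ c es vs f} :
      SEvalList ρ es f (some vs) →
      SEval ρ (.constr c es) (f + 1) (.val (.constr c vs))
  | constr_oot {ρ c es f} :
      SEvalList ρ es f none → SEval ρ (.constr c es) (f + 1) .oot
  | smatch {ρ e bs c vs e' r f1 f2} :
      SEval ρ e f1 (.val (.constr c vs)) →
      bs.lookup c = some e' →
      SEval ρ e' f2 r →
      SEval ρ (.smatch e bs) (f1 + f2 + 1) r
  | smatch_oot {ρ e bs f1} :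
      SEval ρ e f1 .oot → SEval ρ (.smatch e bs) (f1 + 1) .oot

inductive SEvalList : List SVal → List SExp → ℕ → Option (List SVal) → Prop where
  | nil {ρ} : SEvalList ρ [] 0 (some [])
  | cons {ρ e es v vs f1 f2} :
      SEval ρ e f1 (.val v) → SEvalList ρ es f2 (some vs) →
      SEvalList ρ (e :: es) (f1 + f2) (some (v :: vs))
  | cons_oot {ρ e es f1} :
      SEval ρ e f1 .oot → SEvalList ρ (e :: es) f1 none
  | cons_oot2 {ρ e es v f1 f2} :
      SEval ρ e f1 (.val v) → SEvalList ρ es f2 none →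
      SEvalList ρ (e :: es) (f1 + f2) none
end

/-- `SWf n e`: all free de Bruijn indices of `e` are below `n`. -/
inductive SWf : ℕ → SExp → Prop where
  | var {n m} : m < n → SWf n (.var m)
  | slet {n e1 e2} : SWf n e1 → SWf (n + 1) e2 → SWf n (.slet e1 e2)
  | lam {n e} : SWf (n + 1) e → SWf n (.lam e)
  | app {n e1 e2} : SWf n e1 → SWf n e2 → SWf n (.app e1 e2)
  | constr {n c es} : (∀ e ∈ es, SWf n e) → SWf n (.constr c es)
  | smatch {n e bs} : SWf n e → (∀ b ∈ bs, SWf n b.2) → SWf n (.smatch e bs)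

/-- Well-formed source values: every closure `Clo(ρ, e)` has `e` well-formed
w.r.t. `|ρ| + 1` and `ρ` well-formed. -/
inductive SValWf : SVal → Prop where
  | constr {c vs} : (∀ v ∈ vs, SValWf v) → SValWf (.constr c vs)
  | clo {ρ e} : (∀ v ∈ ρ, SValWf v) → SWf (ρ.length + 1) e → SValWf (.clo ρ e)

def SEnvWf (ρ : List SVal) : Prop := ∀ v ∈ ρ, SValWf v

/-! ## Target language λANF (named variables) -/

inductive TExp : Type where
  | constr : Var → CTag → List Var → TExp → TExp    -- let x = C(ys) in e
  | proj : Var → Var → ℕ → TExp → TExp              -- let x = y.i in e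
  | fn : Var → List Var → TExp → TExp → TExp        -- fun f xs = e1 in e2
  | call : Var → Var → List Var → TExp → TExp       -- let x = f ys in e
  | ccase : Var → List (CTag × TExp) → TExp         -- case y of [Ci → ei]
  | tailcall : Var → List Var → TExp                -- f xs
  | halt : Var → TExp                               -- halt x

inductive TVal : Type where
  | constr : CTag → List TVal → TVal
  | clo : (Var → Option TVal) → Var → List Var → TExp → TVal  -- Clo(σ, fun f xs = e)

abbrev TEnv := Var → Option TVal

def upd (σ : TEnv) (x : Var) (v : TVal) : TEnv :=
  fun y => if y = x then some v else σ y

def updList (σ : TEnv) (xs : List Var) (vs : List TVal) : TEnv :=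
  (xs.zip vs).foldl (fun σ p => upd σ p.1 p.2) σ

def getList (σ : TEnv) (xs : List Var) : Option (List TVal) := xs.mapM σ

inductive TRes : Type where
  | val : TVal → TRes
  | oot : TRes

/-- Fuel-indexed big-step semantics of λANF: one fuel unit per rule application. -/
inductive TEval : TEnv → TExp → ℕ → TRes → Prop where
  | oot {σ e} : TEval σ e 0 .oot
  | constr {σ x c ys e vs f r} :
      getList σ ys = some vs →
      TEval (upd σ x (.constr c vs)) e f r →
      TEval σ (.constr x c ys e) (f + 1) r
  | proj {σ x y i e c vs v f r} :
      σ y = some (.constr c vs) → vs[i]? = some v →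
      TEval (upd σ x v) e f r →
      TEval σ (.proj x y i e) (f + 1) r
  | fn {σ f xs e1 e2 fu r} :
      TEval (upd σ f (.clo σ f xs e1)) e2 fu r →
      TEval σ (.fn f xs e1 e2) (fu + 1) r
  | call {σ x g ys e σ' g' xs eb vs v f1 f2 r} :
      σ g = some (.clo σ' g' xs eb) →
      getList σ ys = some vs →
      xs.length = vs.length →
      TEval (updList (upd σ' g' (.clo σ' g' xs eb)) xs vs) eb f1 (.val v) →
      TEval (upd σ x v) e f2 r →
      TEval σ (.call x g ys e) (f1 + f2 + 1) r
  | call_oot {σ x g ys e σ' g' xs eb vs f1} :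
      σ g = some (.clo σ' g' xs eb) →
      getList σ ys = some vs →
      xs.length = vs.length →
      TEval (updList (upd σ' g' (.clo σ' g' xs eb)) xs vs) eb f1 .oot →
      TEval σ (.call x g ys e) (f1 + 1) .oot
  | ccase {σ y bs c vs e' f r} :
      σ y = some (.constr c vs) →
      bs.lookup c = some e' →
      TEval σ e' f r →
      TEval σ (.ccase y bs) (f + 1) r
  | tailcall {σ g ys σ' g' xs eb vs f r} :
      σ g = some (.clo σ' g' xs eb) →
      getList σ ys = some vs →
      xs.length = vs.length →
      TEval (updList (upd σ' g' (.clo σ' g' xs eb)) xs vs) eb f r →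
      TEval σ (.tailcall g ys) (f + 1) r
  | halt {σ x v} :
      σ x = some v → TEval σ (.halt x) 1 (.val v)

/-! ## 1-hole contexts (hole in tail position) -/

inductive Ctx : Type where
  | hole : Ctx
  | constr : Var → CTag → List Var → Ctx → Ctx
  | proj : Var → Var → ℕ → Ctx → Ctx
  | call : Var → Var → List Var → Ctx → Ctx
  | fn : Var → List Var → TExp → Ctx → Ctx

def Ctx.plug : Ctx → TExp → TExp
  | .hole, e => e
  | .constr x c ys C, e => .constr x c ys (C.plug e)
  | .proj x y i C, e => .proj x y i (C.plug e)
  | .call x g ys C, e => .call x g ys (C.plug e)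
  | .fn f xs eb C, e => .fn f xs eb (C.plug e)

def Ctx.comp : Ctx → Ctx → Ctx
  | .hole, D => D
  | .constr x c ys C, D => .constr x c ys (C.comp D)
  | .proj x y i C, D => .proj x y i (C.comp D)
  | .call x g ys C, D => .call x g ys (C.comp D)
  | .fn f xs eb C, D => .fn f xs eb (C.comp D)

/-! ## Free and bound variables of λANF expressions and contexts -/

inductive TExp.FV : TExp → Var → Prop where
  | constr_arg {x c ys e y} : y ∈ ys → TExp.FV (.constr x c ys e) y
  | constr_cont {x c ys e z} : TExp.FV e z → z ≠ x → TExp.FV (.constr x c ys e) z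
  | proj_scrut {x y i e} : TExp.FV (.proj x y i e) y
  | proj_cont {x y i e z} : TExp.FV e z → z ≠ x → TExp.FV (.proj x y i e) z
  | fn_body {f xs e1 e2 z} : TExp.FV e1 z → z ≠ f → z ∉ xs → TExp.FV (.fn f xs e1 e2) z
  | fn_cont {f xs e1 e2 z} : TExp.FV e2 z → z ≠ f → TExp.FV (.fn f xs e1 e2) z
  | call_fn {x g ys e} : TExp.FV (.call x g ys e) g
  | call_arg {x g ys e y} : y ∈ ys → TExp.FV (.call x g ys e) y
  | call_cont {x g ys e z} : TExp.FV e z → z ≠ x → TExp.FV (.call x g ys e) z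
  | ccase_scrut {y bs} : TExp.FV (.ccase y bs) y
  | ccase_branch {y bs c e' z} : (c, e') ∈ bs → TExp.FV e' z → TExp.FV (.ccase y bs) z
  | tailcall_fn {g ys} : TExp.FV (.tailcall g ys) g
  | tailcall_arg {g ys y} : y ∈ ys → TExp.FV (.tailcall g ys) y
  | halt {x} : TExp.FV (.halt x) x

/-- Variables bound somewhere inside a λANF expression. -/
inductive TExp.BV : TExp → Var → Prop where
  | constr_bind {x c ys e} : TExp.BV (.constr x c ys e) x
  | constr_cont {x c ys e z} : TExp.BV e z → TExp.BV (.constr x c ys e) z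
  | proj_bind {x y i e} : TExp.BV (.proj x y i e) x
  | proj_cont {x y i e z} : TExp.BV e z → TExp.BV (.proj x y i e) z
  | fn_name {f xs e1 e2} : TExp.BV (.fn f xs e1 e2) f
  | fn_param {f xs e1 e2 x} : x ∈ xs → TExp.BV (.fn f xs e1 e2) x
  | fn_body {f xs e1 e2 z} : TExp.BV e1 z → TExp.BV (.fn f xs e1 e2) z
  | fn_cont {f xs e1 e2 z} : TExp.BV e2 z → TExp.BV (.fn f xs e1 e2) z
  | call_bind {x g ys e} : TExp.BV (.call x g ys e) x
  | call_cont {x g ys e z} : TExp.BV e z → TExp.BV (.call x g ys e) z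
  | ccase_branch {y bs c e' z} : (c, e') ∈ bs → TExp.BV e' z → TExp.BV (.ccase y bs) z

/-- Variables bound by a 1-hole context (including variables bound inside the
bodies of functions hanging off it). -/
inductive Ctx.BV : Ctx → Var → Prop where
  | constr_bind {x c ys C} : Ctx.BV (.constr x c ys C) x
  | constr_cont {x c ys C z} : Ctx.BV C z → Ctx.BV (.constr x c ys C) z
  | proj_bind {x y i C} : Ctx.BV (.proj x y i C) x
  | proj_cont {x y i C z} : Ctx.BV C z → Ctx.BV (.proj x y i C) z
  | call_bind {x g ys C} : Ctx.BV (.call x g ys C) x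
  | call_cont {x g ys C z} : Ctx.BV C z → Ctx.BV (.call x g ys C) z
  | fn_name {f xs eb C} : Ctx.BV (.fn f xs eb C) f
  | fn_param {f xs eb C x} : x ∈ xs → Ctx.BV (.fn f xs eb C) x
  | fn_body {f xs eb C z} : TExp.BV eb z → Ctx.BV (.fn f xs eb C) z
  | fn_cont {f xs eb C z} : Ctx.BV C z → Ctx.BV (.fn f xs eb C) z

/-! ## Step-indexed logical relation on λANF -/

/-- Result relation relative to a value relation. -/
def ResRelOf (V : TVal → TVal → Prop) : TRes → TRes → Prop
  | .oot, .oot => True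
  | .val v1, .val v2 => V v1 v2
  | _, _ => False

/-- Expression (configuration) relation relative to a value relation. -/
def ExpRelOf (V : TVal → TVal → Prop) (σ1 : TEnv) (e1 : TExp) (σ2 : TEnv) (e2 : TExp) : Prop :=
  ∀ f1 r1, TEval σ1 e1 f1 r1 →
    ∃ f2 r2, TEval σ2 e2 f2 r2 ∧ ResRelOf V r1 r2

/-- Value relation at index `k`, given the relation at all smaller indices. -/
inductive ValRelAux (k : ℕ) (rec : (i : ℕ) → i < k → TVal → TVal → Prop) :
    TVal → TVal → Prop where
  | constr {c vs1 vs2} :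
      vs1.length = vs2.length →
      (∀ (j : ℕ) v1 v2, vs1[j]? = some v1 → vs2[j]? = some v2 → ValRelAux k rec v1 v2) →
      ValRelAux k rec (.constr c vs1) (.constr c vs2)
  | clo {σ1 σ2 : TEnv} {f g : Var} {xs ys : List Var} {e1 e2 : TExp} :
      (∀ i (h : i < k) (vs1 vs2 : List TVal),
        vs1.length = vs2.length →
        (∀ (j : ℕ) v1 v2, vs1[j]? = some v1 → vs2[j]? = some v2 → rec i h v1 v2) →
        xs.length = vs1.length →
        ys.length = vs2.length ∧
        ExpRelOf (rec i h)
          (updList (upd σ1 f (.clo σ1 f xs e1)) xs vs1) e1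
          (updList (upd σ2 g (.clo σ2 g ys e2)) ys vs2) e2) →
      ValRelAux k rec (.clo σ1 f xs e1) (.clo σ2 g ys e2)

/-- Step-indexed value relation `v1 ≼k v2`. -/
def ValRel (k : ℕ) : TVal → TVal → Prop :=
  ValRelAux k (fun i h => ValRel i)
termination_by k
decreasing_by exact h

/-- Step-indexed result relation `r1 ≼k r2`. -/
def ResRel (k : ℕ) : TRes → TRes → Prop := ResRelOf (ValRel k)

/-- Step-indexed expression relation `(σ1, e1) ⪅k (σ2, e2)`. -/
def ExpRel (k : ℕ) : TEnv → TExp → TEnv → TExp → Prop := ExpRelOf (ValRel k)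

/-! ## The relational ANF transformation -/

-- `AnfRel S e xs C r S'` is the relational ANF transformation `S ⊢ e, x⃗ ⇒ C, r, S′`.
mutual
inductive AnfRel : Set Var → SExp → List Var → Ctx → Var → Set Var → Prop where
  | var {S n xs y} :
      xs[n]? = some y →
      AnfRel S (.var n) xs .hole y S
  | lam {S S' e xs x1 f C1 r1} :
      x1 ∈ S → f ∈ S \ {x1} →
      AnfRel (S \ {x1, f}) e (x1 :: xs) C1 r1 S' →
      AnfRel S (.lam e) xs (.fn f [x1] (C1.plug (.halt r1)) .hole) f S'
  | app {S1 S2 S3 e1 e2 xs C1 C2 x1 x2 r} :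
      AnfRel S1 e1 xs C1 x1 S2 →
      AnfRel S2 e2 xs C2 x2 S3 →
      r ∈ S3 →
      AnfRel S1 (.app e1 e2) xs ((C1.comp C2).comp (.call r x1 [x2] .hole)) r (S3 \ {r})
  | constr {S1 S2 c es xs C ys z} :
      z ∈ S1 →
      AnfRelList (S1 \ {z}) es xs C ys S2 →
      AnfRel S1 (.constr c es) xs (C.comp (.constr z c ys .hole)) z S2
  | slet {S1 S2 S3 e1 e2 xs C1 C2 x1 x2} :
      AnfRel S1 e1 xs C1 x1 S2 →
      AnfRel S2 e2 (x1 :: xs) C2 x2 S3 →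
      AnfRel S1 (.slet e1 e2) xs (C1.comp C2) x2 S3
  | smatch {S1 S2 S3 e bs bs' xs C1 y jp d r} :
      AnfRel S1 e xs C1 y S2 →
      jp ∈ S2 → d ∈ S2 \ {jp} →
      AnfRelBranches (S2 \ {jp, d}) bs xs bs' S3 →
      r ∈ S3 →
      AnfRel S1 (.smatch e bs) xs
        ((C1.comp (.fn jp [d] (.ccase d bs') .hole)).comp (.call r jp [y] .hole))
        r (S3 \ {r})

/-- Left-to-right translation of a list of arguments, threading the name set. -/
inductive AnfRelList : Set Var → List SExp → List Var → Ctx → List Var → Set Var → Prop where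
  | nil {S xs} : AnfRelList S [] xs .hole [] S
  | cons {S1 S2 S3 e es xs C1 C2 y ys} :
      AnfRel S1 e xs C1 y S2 →
      AnfRelList S2 es xs C2 ys S3 →
      AnfRelList S1 (e :: es) xs (C1.comp C2) (y :: ys) S3

/-- Translation of match branches. -/
inductive AnfRelBranches : Set Var → List (CTag × SExp) → List Var →
    List (CTag × TExp) → Set Var → Prop where
  | nil {S xs} : AnfRelBranches S [] xs [] S
  | cons {S1 S2 S3 c e es xs C r bs'} :
      AnfRel S1 e xs C r S2 →
      AnfRelBranches S2 es xs bs' S3 →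
      AnfRelBranches S1 ((c, e) :: es) xs ((c, C.plug (.halt r)) :: bs') S3
end

/-! ## The ANF value translation relation -/

inductive AnfValRel : SVal → TVal → Prop where
  | constr {c vs vs'} :
      vs.length = vs'.length →
      (∀ (i : ℕ) v v', vs[i]? = some v → vs'[i]? = some v' → AnfValRel v v') →
      AnfValRel (.constr c vs) (.constr c vs')
  | clo {ρ e σ f x1 C1 r1} {S S' : Set Var} {xs : List Var} :
      (∀ x ∈ xs, x ∉ S ∪ {x1, f}) →
      AnfRel S e (x1 :: xs) C1 r1 S' →
      xs.length = ρ.length →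
      (∀ (i : ℕ) x, xs[i]? = some x → (σ x).isSome) →
      (∀ (i : ℕ) x v v', xs[i]? = some x → ρ[i]? = some v → σ x = some v' → AnfValRel v v') →
      AnfValRel (.clo ρ e) (.clo σ f [x1] (C1.plug (.halt r1)))

/-- `anf_env_rel(x⃗, ρ, σ)`. -/
def AnfEnvRel (xs : List Var) (ρ : List SVal) (σ : TEnv) : Prop :=
  xs.length = ρ.length ∧
  ∀ (i : ℕ) x v, xs[i]? = some x → ρ[i]? = some v →
    ∃ v', σ x = some v' ∧ AnfValRel v v'

/-! ## The observation relation -/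

inductive ObsRel : SVal → TVal → Prop where
  | constr {c vs vs'} :
      vs.length = vs'.length →
      (∀ (i : ℕ) v v', vs[i]? = some v → vs'[i]? = some v' → ObsRel v v') →
      ObsRel (.constr c vs) (.constr c vs')
  | clo {ρ e σ f xs e'} : ObsRel (.clo ρ e) (.clo σ f xs e')


/-! ## Auxiliary lemmas for `anf_val_rel_exists` -/

private lemma anf_pick {S : Set Var} (hS : S.Infinite) : ∃ x, x ∈ S :=
  hS.nonempty

private lemma anf_diff_inf {S : Set Var} (hS : S.Infinite) (T : Set Var)
    (hT : T.Finite) : (S \ T).Infinite :=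
  hS.diff hT

/-- Totality of the list transformation, given totality on elements. -/
private lemma anf_total_list (es : List SExp) (xs : List Var)
    (ih : ∀ e ∈ es, ∀ S : Set Var, S.Infinite →
      ∃ C r S', AnfRel S e xs C r S' ∧ S'.Infinite) :
    ∀ S : Set Var, S.Infinite →
      ∃ C ys S', AnfRelList S es xs C ys S' ∧ S'.Infinite := by
  induction es with
  | nil => intro S hS; exact ⟨.hole, [], S, .nil, hS⟩
  | cons e es ihl =>
    intro S hS
    obtain ⟨C1, y, S2, h1, hS2⟩ := ih e (by simp) S hS
    obtain ⟨C2, ys, S3, h2, hS3⟩ :=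
      ihl (fun e' he' => ih e' (by simp [he'])) S2 hS2
    exact ⟨C1.comp C2, y :: ys, S3, .cons h1 h2, hS3⟩

/-- Totality of the branch transformation, given totality on elements. -/
private lemma anf_total_branches (bs : List (CTag × SExp)) (xs : List Var)
    (ih : ∀ b ∈ bs, ∀ S : Set Var, S.Infinite →
      ∃ C r S', AnfRel S b.2 xs C r S' ∧ S'.Infinite) :
    ∀ S : Set Var, S.Infinite →
      ∃ bs' S', AnfRelBranches S bs xs bs' S' ∧ S'.Infinite := by
  induction bs with
  | nil => intro S hS; exact ⟨[], S, .nil, hS⟩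
  | cons b bs ihl =>
    intro S hS
    obtain ⟨c, e⟩ := b
    obtain ⟨C1, r, S2, h1, hS2⟩ := ih (c, e) (by simp) S hS
    obtain ⟨bs', S3, h2, hS3⟩ :=
      ihl (fun b' hb' => ih b' (by simp [hb'])) S2 hS2
    exact ⟨(c, C1.plug (.halt r)) :: bs', S3, .cons h1 h2, hS3⟩

/-- Totality of the ANF transformation on well-formed expressions. -/
private lemma anf_total : ∀ (k : ℕ) (e : SExp), sizeOf e ≤ k →
    ∀ (xs : List Var) (S : Set Var), S.Infinite → SWf xs.length e →
    ∃ C r S', AnfRel S e xs C r S' ∧ S'.Infinite := by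
  intro k
  induction k using Nat.strong_induction_on with
  | _ k IH =>
    intro e hk xs S hS hwf
    cases e with
    | var n =>
      cases hwf with
      | var h =>
        exact ⟨.hole, xs[n], S, .var (List.getElem?_eq_getElem h), hS⟩
    | slet e1 e2 =>
      cases hwf with
      | slet h1 h2 =>
        have s1 : sizeOf e1 < k := by have := hk; simp at this ⊢; omega
        have s2 : sizeOf e2 < k := by have := hk; simp at this ⊢; omega
        obtain ⟨C1, x1, S2, r1, hS2⟩ := IH _ s1 e1 le_rfl xs S hS h1
        obtain ⟨C2, x2, S3, r2, hS3⟩ := IH _ s2 e2 le_rfl (x1 :: xs) S2 hS2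
          (by simpa using h2)
        exact ⟨C1.comp C2, x2, S3, .slet r1 r2, hS3⟩
    | lam e =>
      cases hwf with
      | lam h =>
        have s1 : sizeOf e < k := by have := hk; simp at this ⊢; omega
        obtain ⟨x1, hx1⟩ := anf_pick hS
        obtain ⟨f, hf⟩ := anf_pick (anf_diff_inf hS {x1} (Set.finite_singleton _))
        have hS' : (S \ {x1, f}).Infinite :=
          anf_diff_inf hS _ (Set.toFinite _)
        obtain ⟨C1, r1, S', r, hS'2⟩ := IH _ s1 e le_rfl (x1 :: xs) _ hS'
          (by simpa using h)
        exact ⟨_, f, S', .lam hx1 hf r, hS'2⟩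
    | app e1 e2 =>
      cases hwf with
      | app h1 h2 =>
        have s1 : sizeOf e1 < k := by have := hk; simp at this ⊢; omega
        have s2 : sizeOf e2 < k := by have := hk; simp at this ⊢; omega
        obtain ⟨C1, x1, S2, r1, hS2⟩ := IH _ s1 e1 le_rfl xs S hS h1
        obtain ⟨C2, x2, S3, r2, hS3⟩ := IH _ s2 e2 le_rfl xs S2 hS2 h2
        obtain ⟨r, hr⟩ := anf_pick hS3
        exact ⟨_, r, _, .app r1 r2 hr,
          anf_diff_inf hS3 {r} (Set.finite_singleton _)⟩
    | constr c es =>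
      cases hwf with
      | constr h =>
        obtain ⟨z, hz⟩ := anf_pick hS
        have hSz : (S \ {z}).Infinite :=
          anf_diff_inf hS {z} (Set.finite_singleton _)
        obtain ⟨C, ys, S2, hlist, hS2⟩ := anf_total_list es xs
          (fun e' he' S' hS' => by
            refine IH (sizeOf e') ?_ e' le_rfl xs S' hS' (h e' he')
            have h1 := List.sizeOf_lt_of_mem he'
            have := hk; simp at this; omega) _ hSz
        exact ⟨_, z, S2, .constr hz hlist, hS2⟩
    | smatch e bs =>
      cases hwf with
      | smatch h hb =>
        have s1 : sizeOf e < k := by have := hk; simp at this ⊢; omega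
        obtain ⟨C1, y, S2, r1, hS2⟩ := IH _ s1 e le_rfl xs S hS h
        obtain ⟨jp, hjp⟩ := anf_pick hS2
        obtain ⟨d, hd⟩ := anf_pick (anf_diff_inf hS2 {jp} (Set.finite_singleton _))
        have hS2' : (S2 \ {jp, d}).Infinite := anf_diff_inf hS2 _ (Set.toFinite _)
        obtain ⟨bs', S3, hbr, hS3⟩ := anf_total_branches bs xs
          (fun b hbm S' hS' => by
            refine IH (sizeOf b.2) ?_ b.2 le_rfl xs S' hS' (hb b hbm)
            have h1 := List.sizeOf_lt_of_mem hbm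
            have h2 : sizeOf b.2 < sizeOf b := by
              obtain ⟨b1, b2⟩ := b; simp
            have := hk; simp at this; omega) _ hS2'
        obtain ⟨r, hr⟩ := anf_pick hS3
        exact ⟨_, r, _, .smatch r1 hjp hd hbr hr,
          anf_diff_inf hS3 {r} (Set.finite_singleton _)⟩

/-- Existence of related lists of target values, given existence on elements. -/
private lemma anf_val_list (vs : List SVal)
    (ih : ∀ v ∈ vs, ∃ v', AnfValRel v v') :
    ∃ vs' : List TVal, vs.length = vs'.length ∧
      ∀ (i : ℕ) v v', vs[i]? = some v → vs'[i]? = some v' → AnfValRel v v' := by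
  induction vs with
  | nil => exact ⟨[], rfl, by simp⟩
  | cons v vs ihl =>
    obtain ⟨v', hv'⟩ := ih v (by simp)
    obtain ⟨vs', hlen, hrel⟩ := ihl (fun w hw => ih w (by simp [hw]))
    refine ⟨v' :: vs', by simp [hlen], ?_⟩
    intro i a a' ha ha'
    cases i with
    | zero => simp at ha ha'; subst ha; subst ha'; exact hv'
    | succ i => simp at ha ha'; exact hrel i _ _ ha ha'

/-- **Existence of related target values** (`anf_val_rel_exists`). -/
theorem anf_val_rel_exists (v : SVal) (hv : SValWf v) :
    ∃ v' : TVal, AnfValRel v v' := by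
  suffices key : ∀ (k : ℕ) (v : SVal), sizeOf v ≤ k → SValWf v → ∃ v', AnfValRel v v' from
    key (sizeOf v) v le_rfl hv
  clear hv v
  intro k
  induction k using Nat.strong_induction_on with
  | _ k IH =>
    intro v hk hv
    cases v with
    | constr c vs =>
      cases hv with
      | constr h =>
        obtain ⟨vs', hlen, hrel⟩ := anf_val_list vs (fun w hw => by
          refine IH (sizeOf w) ?_ w le_rfl (h w hw)
          have h2 := List.sizeOf_lt_of_mem hw
          have := hk; simp at this; omega)
        exact ⟨.constr c vs', .constr hlen hrel⟩
    | clo ρ e =>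
      cases hv with
      | clo hρ he =>
        obtain ⟨vs', hlen, hrel⟩ := anf_val_list ρ (fun w hw => by
          refine IH (sizeOf w) ?_ w le_rfl (hρ w hw)
          have h2 := List.sizeOf_lt_of_mem hw
          have := hk; simp at this; omega)
        have hS : (Set.Ici (ρ.length + 2) : Set Var).Infinite := Set.Ici_infinite _
        obtain ⟨C1, r1, S', hanf, _⟩ := anf_total (sizeOf e) e le_rfl
          (ρ.length :: List.range ρ.length) (Set.Ici (ρ.length + 2)) hS
          (by simpa using he)
        refine ⟨_, AnfValRel.clo (ρ := ρ) (σ := fun x => vs'[x]?)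
          (f := ρ.length + 1) (x1 := ρ.length) (S := Set.Ici (ρ.length + 2))
          (S' := S') (C1 := C1) (r1 := r1) (e := e)
          (xs := List.range ρ.length) ?_ hanf (by simp) ?_ ?_⟩
        · intro x hx
          simp only [List.mem_range] at hx
          simp only [Set.mem_union, Set.mem_Ici, Set.mem_insert_iff,
            Set.mem_singleton_iff]
          rintro (h | rfl | rfl)
          · have h2 : (ρ.length + 2 : ℕ) ≤ x := h
            omega
          · omega
          · omega
        · intro i x hix
          obtain ⟨hi, hxe⟩ := List.getElem?_eq_some_iff.mp hix
          simp only [List.length_range] at hi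
          simp only [List.getElem_range] at hxe
          subst hxe
          exact Option.isSome_iff_exists.mpr
            ⟨_, List.getElem?_eq_getElem (by omega)⟩
        · intro i x v v' hix hρi hσ
          obtain ⟨hi, hxe⟩ := List.getElem?_eq_some_iff.mp hix
          simp only [List.getElem_range] at hxe
          subst hxe
          exact hrel i v v' hρi hσ

end ANF
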